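/- Let G be an undirected graph and let S ⊆ V(G) with |S| ≥ 2 be an independent set in G. Then the maximum number of pairwise internally disjoint S-trees in G equals the maximum number of pairwise internally disjoint strong subgraphs of ↔G containing S, i.e. κ_S(G) = κ_S(↔G). -/

import Mathlib

/-- A digraph on vertex type `V`: a directed graph without parallel arcs,
given by its arc relation. -/
structure Digr (V : Type*) where
  Adj : V → V → Prop

/-- A subdigraph of a digraph `D`: a set of vertices together with a set of
arcs of `D` whose endpoints lie in the vertex set. -/
structure Subdigr {V : Type*} (D : Digr V) where
  verts : Set V
  arcs : Set (V × V)
  arcs_adj : ∀ a ∈ arcs, D.Adj a.1 a.2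
  arcs_verts : ∀ a ∈ arcs, a.1 ∈ verts ∧ a.2 ∈ verts

/-- A subdigraph is strong (strongly connected) if every vertex reaches every
other vertex by a directed walk using its arcs.  A single vertex is strong. -/
def Subdigr.IsStrong {V : Type*} {D : Digr V} (H : Subdigr D) : Prop :=
  ∀ u ∈ H.verts, ∀ v ∈ H.verts,
    Relation.ReflTransGen (fun a b => (a, b) ∈ H.arcs) u v

/-- `HasIDSS D S p` : there are `p` pairwise internally disjoint strong
subgraphs of `D`, each containing `S`. -/
def HasIDSS {V : Type*} (D : Digr V) (S : Set V) (p : ℕ) : Prop :=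
  ∃ f : Fin p → Subdigr D,
    (∀ i, (f i).IsStrong ∧ S ⊆ (f i).verts) ∧
    (∀ i j, i ≠ j → (f i).verts ∩ (f j).verts = S ∧ (f i).arcs ∩ (f j).arcs = ∅)

/-- `κ_S(D)`: the maximum number of pairwise internally disjoint strong
subgraphs of `D` containing `S`. -/
noncomputable def kappaS {V : Type*} (D : Digr V) (S : Set V) : ℕ :=
  sSup {p | HasIDSS D S p}

/-- `κ_k(D)`: the strong subgraph `k`-connectivity of `D`. -/
noncomputable def kappaK {V : Type*} [Fintype V] (D : Digr V) (k : ℕ) : ℕ :=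
  sInf {m | ∃ S : Finset V, S.card = k ∧ kappaS D (↑S : Set V) = m}

/-- The complete biorientation of an undirected graph `G`: each edge `uv` is
replaced by the two arcs `uv` and `vu`. -/
def biorient {V : Type*} (G : SimpleGraph V) : Digr V := ⟨G.Adj⟩

/-- A digraph is strong if every vertex reaches every other vertex. -/
def Digr.IsStrong {V : Type*} (D : Digr V) : Prop :=
  ∀ u v : V, Relation.ReflTransGen D.Adj u v

/-- An `S`-tree in `G`: a subgraph of `G` that is a tree and contains `S`. -/
def IsSTree {V : Type*} (G : SimpleGraph V) (S : Set V) (T : G.Subgraph) : Prop :=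
  T.coe.IsTree ∧ S ⊆ T.verts

/-- `HasIDTrees G S p` : there are `p` pairwise internally disjoint `S`-trees
in `G` (vertex sets intersecting exactly in `S`, edge sets disjoint). -/
def HasIDTrees {V : Type*} (G : SimpleGraph V) (S : Set V) (p : ℕ) : Prop :=
  ∃ f : Fin p → G.Subgraph,
    (∀ i, IsSTree G S (f i)) ∧
    (∀ i j, i ≠ j → (f i).verts ∩ (f j).verts = S ∧
      (f i).edgeSet ∩ (f j).edgeSet = ∅)

/-- `κ_S(G)`: the maximum number of pairwise internally disjoint `S`-trees. -/
noncomputable def kappaSTrees {V : Type*} (G : SimpleGraph V) (S : Set V) : ℕ :=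
  sSup {p | HasIDTrees G S p}

/-! The biorientation of an `S`-tree is a strong subgraph of `↔G`, and a spanning tree of the
underlying graph of a strong subgraph is an `S`-tree; both keep the vertex set, and disjoint
edge sets give disjoint arc sets. Disjoint arc sets give disjoint underlying edge sets unless
two strong subgraphs use one edge `ab` in opposite directions; then `a` and `b` lie in both
vertex sets, hence in `S`, which is independent. -/

open SimpleGraph

section

variable {V : Type*} {G : SimpleGraph V}

lemma SimpleGraph.Subgraph.Connected.exists_isTree_le {H : G.Subgraph} (hH : H.Connected) :
    ∃ T ≤ H, T.verts = H.verts ∧ T.coe.IsTree := by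
  obtain ⟨T', hle, hT'⟩ := hH.coe.exists_isTree_le
  let T : G.Subgraph :=
    { verts := H.verts
      Adj a b := ∃ (ha : a ∈ H.verts) (hb : b ∈ H.verts), T'.Adj ⟨a, ha⟩ ⟨b, hb⟩
      adj_sub := fun ⟨_, _, h⟩ => H.adj_sub (hle h)
      edge_vert := fun ⟨ha, _, _⟩ => ha
      symm := ⟨fun _ _ ⟨ha, hb, h⟩ => ⟨hb, ha, h.symm⟩⟩ }
  have hcoe : T.coe = T' := by
    ext ⟨a, ha⟩ ⟨b, hb⟩
    exact ⟨fun ⟨_, _, h⟩ => h, fun h => ⟨ha, hb, h⟩⟩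
  exact ⟨T, ⟨le_rfl, fun _ _ ⟨_, _, h⟩ => hle h⟩, rfl, hcoe ▸ hT'⟩

def SimpleGraph.Subgraph.biorientation (T : G.Subgraph) : Subdigr (biorient G) where
  verts := T.verts
  arcs := {a | T.Adj a.1 a.2}
  arcs_adj _ h := T.adj_sub h
  arcs_verts _ h := ⟨T.edge_vert h, T.edge_vert h.symm⟩

lemma SimpleGraph.Subgraph.Preconnected.biorientation_isStrong {T : G.Subgraph}
    (hT : T.Preconnected) : T.biorientation.IsStrong := by
  intro u hu v hv
  have huv := (reachable_iff_reflTransGen _ _).mp (hT ⟨u, hu⟩ ⟨v, hv⟩)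
  exact huv.lift Subtype.val fun _ _ h => h

def Subdigr.underlying (H : Subdigr (biorient G)) : G.Subgraph where
  verts := H.verts
  Adj a b := (a, b) ∈ H.arcs ∨ (b, a) ∈ H.arcs
  adj_sub := by
    rintro a b (h | h)
    exacts [H.arcs_adj _ h, (H.arcs_adj _ h).symm]
  edge_vert := by
    rintro a b (h | h)
    exacts [(H.arcs_verts _ h).1, (H.arcs_verts _ h).2]
  symm := ⟨fun _ _ => Or.symm⟩

lemma Subdigr.IsStrong.underlying_connected {H : Subdigr (biorient G)} (hH : H.IsStrong)
    (hne : H.verts.Nonempty) : H.underlying.Connected := by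
  refine Subgraph.connected_iff.mpr ⟨⟨fun ⟨u, hu⟩ ⟨v, hv⟩ => ?_⟩, hne⟩
  induction hH u hu v hv with
  | refl => rfl
  | tail _ hbc ih =>
    exact (ih (H.arcs_verts _ hbc).1).trans (Subgraph.Adj.coe (Or.inl hbc)).reachable

lemma Subdigr.underlying_edgeSet_inter_eq_empty {S : Set V} {H₁ H₂ : Subdigr (biorient G)}
    (hind : ∀ u ∈ S, ∀ v ∈ S, ¬ G.Adj u v) (hverts : H₁.verts ∩ H₂.verts = S)
    (harcs : H₁.arcs ∩ H₂.arcs = ∅) :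
    H₁.underlying.edgeSet ∩ H₂.underlying.edgeSet = ∅ := by
  have common {a b : V} (h₁ : (a, b) ∈ H₁.arcs) (h₂ : (a, b) ∈ H₂.arcs) : False :=
    harcs.subset ⟨h₁, h₂⟩
  have opposite {a b : V} (h₁ : (a, b) ∈ H₁.arcs) (h₂ : (b, a) ∈ H₂.arcs) : False := by
    have haS : a ∈ S := hverts ▸ ⟨(H₁.arcs_verts _ h₁).1, (H₂.arcs_verts _ h₂).2⟩
    have hbS : b ∈ S := hverts ▸ ⟨(H₁.arcs_verts _ h₁).2, (H₂.arcs_verts _ h₂).1⟩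
    exact hind a haS b hbS (H₁.arcs_adj _ h₁)
  refine Set.eq_empty_of_forall_notMem fun e => ?_
  induction e using Sym2.ind with
  | _ a b =>
    rintro ⟨h₁ | h₁, h₂ | h₂⟩
    exacts [common h₁ h₂, opposite h₁ h₂, opposite h₁ h₂, common h₁ h₂]

variable {S : Set V} {p : ℕ}

lemma HasIDTrees.hasIDSS (h : HasIDTrees G S p) : HasIDSS (biorient G) S p := by
  obtain ⟨f, hf, hdis⟩ := h
  refine ⟨fun i => (f i).biorientation,
    fun i => ⟨Subgraph.Preconnected.biorientation_isStrong ⟨(hf i).1.connected.preconnected⟩,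
      (hf i).2⟩,
    fun i j hij => ⟨(hdis i j hij).1, ?_⟩⟩
  refine Set.eq_empty_of_forall_notMem fun ⟨a, b⟩ hab => ?_
  exact (hdis i j hij).2.subset (show s(a, b) ∈ _ ∩ _ from hab)

lemma HasIDSS.hasIDTrees (hS : S.Nonempty) (hind : ∀ u ∈ S, ∀ v ∈ S, ¬ G.Adj u v)
    (h : HasIDSS (biorient G) S p) : HasIDTrees G S p := by
  obtain ⟨g, hg, hdis⟩ := h
  have spanningTree (i) : ∃ T ≤ (g i).underlying, T.verts = (g i).verts ∧ T.coe.IsTree :=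
    ((hg i).1.underlying_connected (hS.mono (hg i).2)).exists_isTree_le
  choose f hle hverts htree using spanningTree
  refine ⟨f, fun i => ⟨htree i, hverts i ▸ (hg i).2⟩, fun i j hij => ⟨?_, ?_⟩⟩
  · rw [hverts, hverts]
    exact (hdis i j hij).1
  · refine Set.subset_eq_empty (Set.inter_subset_inter ?_ ?_)
      (Subdigr.underlying_edgeSet_inter_eq_empty hind (hdis i j hij).1 (hdis i j hij).2)
    exacts [Subgraph.edgeSet_mono (hle i), Subgraph.edgeSet_mono (hle j)]

end

theorem stmt_3_general {V : Type*} (G : SimpleGraph V) (S : Set V)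
    (hS : 2 ≤ S.ncard) (hind : ∀ u ∈ S, ∀ v ∈ S, ¬ G.Adj u v) :
    kappaSTrees G S = kappaS (biorient G) S := by
  have hne : S.Nonempty := Set.nonempty_of_ncard_ne_zero (by omega)
  unfold kappaSTrees kappaS
  congr 1
  ext p
  exact ⟨HasIDTrees.hasIDSS, HasIDSS.hasIDTrees hne hind⟩

/-- If `S` is an independent set of size at least 2 in a graph `G`, then the
maximum number of pairwise internally disjoint `S`-trees in `G` equals the
maximum number of pairwise internally disjoint strong subgraphs of the
complete biorientation `↔G` containing `S`. -/
theorem stmt_3 {V : Type*} [Fintype V] (G : SimpleGraph V) (S : Set V)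
    (hS : 2 ≤ S.ncard) (hind : ∀ u ∈ S, ∀ v ∈ S, ¬ G.Adj u v) :
    kappaSTrees G S = kappaS (biorient G) S :=
  stmt_3_general G S hS hind
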